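/- Let P ∈ ℂ[x_1,…,x_n] be a nonzero polynomial, let ℓ ≥ 1 be an integer, and suppose C > 0, δ > 0 and y_0 ∈ (0,1] are such that μ_n(S_n(P,y)) ≤ C · y^δ for all 0 < y ≤ y_0. Then for all 0 < y ≤ y_0: 0 ≤ (−1)^ℓ ∫_{S_n(P,y)} (log|P(z_1,…,z_n)|)^ℓ dμ_n ≤ C · J_{ℓ,δ}(y). -/

import Mathlib

open MeasureTheory Real

/-- `J_{ℓ,δ}(y) := (−1)^ℓ δ ∫_0^y (log z)^ℓ z^{δ−1} dz`. -/
noncomputable def J (ℓ : ℕ) (δ y : ℝ) : ℝ :=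
  (-1:ℝ)^ℓ * δ * ∫ z in (0:ℝ)..y, (Real.log z)^ℓ * z ^ (δ - 1)

/-- The parameter box `(0, 2π]ⁿ` parametrizing the torus `𝕋ⁿ`. -/
noncomputable def torusBox (n : ℕ) : Set (Fin n → ℝ) :=
  Set.univ.pi fun _ : Fin n => Set.Ioc (0:ℝ) (2*π)

/-- Evaluation of `P` at `(e^{iθ₁},…,e^{iθₙ})`. -/
noncomputable def evalTorus {n : ℕ} (P : MvPolynomial (Fin n) ℂ) (θ : Fin n → ℝ) : ℂ :=
  MvPolynomial.eval (fun j => Complex.exp ((θ j : ℂ) * Complex.I)) P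

/-- `S_n(P,y)` in the parameter space: `{θ : |P(e^{iθ₁},…,e^{iθₙ})| < y}`. -/
noncomputable def Sn {n : ℕ} (P : MvPolynomial (Fin n) ℂ) (y : ℝ) : Set (Fin n → ℝ) :=
  {θ : Fin n → ℝ | ‖evalTorus P θ‖ < y}

open Set Filter Topology
open scoped ENNReal

/-! For `0 < x ≤ y ≤ 1` the decreasing function `φ(x) = (-log x)^ℓ` satisfies
`φ(x) = φ(y) + ∫_x^y (-φ')`. Integrating this over `S_n(P,y)` and applying Tonelli expresses the
integral through the distribution function of `|P|`:
`∫_{S_n(P,y)} φ(|P|) ≤ φ(y) μ(S_n(P,y)) + ∫_0^y (-φ'(z)) μ(S_n(P,z)) dz`.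
Inserting `μ(S_n(P,z)) ≤ C z^δ` leaves `C (φ(y) y^δ + ∫_0^y (-φ'(z)) z^δ dz)`, which is
`C · J_{ℓ,δ}(y)` by an integration by parts against `δ z^{δ-1}`. -/

lemma neg_log_pow_nonneg (k : ℕ) {x : ℝ} (hx0 : 0 ≤ x) (hx1 : x ≤ 1) : 0 ≤ (-log x) ^ k :=
  pow_nonneg (neg_nonneg.2 (log_nonpos hx0 hx1)) k

lemma tendsto_neg_log_pow_mul_rpow_nhdsGT_zero (k : ℕ) {δ : ℝ} (hδ : 0 < δ) :
    Tendsto (fun z => (-log z) ^ k * z ^ δ) (𝓝[>] 0) (𝓝 0) := by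
  refine (isLittleO_abs_log_rpow_rpow_nhdsGT_zero (k : ℝ) (neg_lt_zero.2 hδ)
    ).tendsto_div_nhds_zero.congr' ?_
  filter_upwards [Ioo_mem_nhdsGT one_pos] with z hz
  rw [rpow_natCast, abs_of_neg (log_neg hz.1 hz.2), rpow_neg hz.1.le, div_inv_eq_mul]

lemma continuousOn_neg_log_pow_mul_rpow (k : ℕ) {δ : ℝ} (hδ : 0 < δ) :
    ContinuousOn (fun z => (-log z) ^ k * z ^ δ) (Ici 0) := by
  intro z hz
  rcases (mem_Ici.1 hz).eq_or_lt with rfl | hz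
  · rw [← continuousWithinAt_Ioi_iff_Ici, ContinuousWithinAt, zero_rpow hδ.ne', mul_zero]
    exact tendsto_neg_log_pow_mul_rpow_nhdsGT_zero k hδ
  · exact (((continuousAt_log hz.ne').neg.pow k).mul
      (continuousAt_rpow_const z δ (.inl hz.ne'))).continuousWithinAt

lemma integrableOn_neg_log_pow_mul_rpow (k : ℕ) {δ : ℝ} (hδ : 0 < δ) (y : ℝ) :
    IntegrableOn (fun z => (-log z) ^ k * z ^ (δ - 1)) (Ioc 0 y) := by
  have hrpow : IntegrableOn (fun z : ℝ => z ^ (δ / 2 - 1)) (Ioc 0 y) :=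
    (intervalIntegral.intervalIntegrable_rpow' (by linarith)).def'.mono_set Ioc_subset_uIoc
  -- `(-log z) ^ k * z ^ (δ / 2)` is bounded near `0`, leaving the integrable `z ^ (δ / 2 - 1)`
  refine (IntegrableOn.continuousOn_mul_of_subset
    ((continuousOn_neg_log_pow_mul_rpow k (half_pos hδ)).mono Icc_subset_Ici_self) hrpow
    isCompact_Icc measurableSet_Ioc Ioc_subset_Icc_self).congr_fun (fun z hz => ?_)
    measurableSet_Ioc
  dsimp only
  rw [mul_assoc, ← rpow_add hz.1]
  ring_nf

lemma integral_neg_log_pow_mul_rpow_nonneg (k : ℕ) (δ : ℝ) {y : ℝ} (hy : 0 ≤ y) (hy1 : y ≤ 1) :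
    0 ≤ ∫ z in 0..y, (-log z) ^ k * z ^ (δ - 1) :=
  intervalIntegral.integral_nonneg hy fun _ hz =>
    mul_nonneg (neg_log_pow_nonneg k hz.1 (hz.2.trans hy1)) (rpow_nonneg hz.1 _)

lemma ofReal_integral_neg_log_pow_mul_rpow (k : ℕ) {δ y : ℝ} (hδ : 0 < δ) (hy : 0 ≤ y)
    (hy1 : y ≤ 1) :
    ENNReal.ofReal (∫ z in 0..y, (-log z) ^ k * z ^ (δ - 1))
      = ∫⁻ z in Ioo 0 y, ENNReal.ofReal ((-log z) ^ k * z ^ (δ - 1)) := by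
  rw [intervalIntegral.integral_of_le hy, integral_Ioc_eq_integral_Ioo,
    ofReal_integral_eq_lintegral_ofReal
      ((integrableOn_neg_log_pow_mul_rpow k hδ y).mono_set Ioo_subset_Ioc_self)]
  exact ae_restrict_of_forall_mem measurableSet_Ioo fun z hz =>
    mul_nonneg (neg_log_pow_nonneg k hz.1.le (hz.2.le.trans hy1)) (rpow_nonneg hz.1.le _)

lemma J_eq_mul_integral_neg_log_pow (ℓ : ℕ) (δ y : ℝ) :
    J ℓ δ y = δ * ∫ z in 0..y, (-log z) ^ ℓ * z ^ (δ - 1) := by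
  simp only [J, neg_pow (log _), mul_assoc, intervalIntegral.integral_const_mul]
  ring

lemma mul_integral_neg_log_pow_mul_rpow (ℓ : ℕ) {δ y : ℝ} (hδ : 0 < δ) (hy : 0 ≤ y) :
    δ * ∫ z in 0..y, (-log z) ^ ℓ * z ^ (δ - 1)
      = (-log y) ^ ℓ * y ^ δ + ℓ * ∫ z in 0..y, (-log z) ^ (ℓ - 1) * z ^ (δ - 1) := by
  have hint (k : ℕ) : IntervalIntegrable (fun z => (-log z) ^ k * z ^ (δ - 1)) volume 0 y :=
    (intervalIntegrable_iff_integrableOn_Ioc_of_le hy).2 (integrableOn_neg_log_pow_mul_rpow k hδ y)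
  have hderiv : ∀ z ∈ Ioo 0 y, HasDerivWithinAt (fun z => (-log z) ^ ℓ * z ^ δ)
      (δ * ((-log z) ^ ℓ * z ^ (δ - 1)) - ℓ * ((-log z) ^ (ℓ - 1) * z ^ (δ - 1))) (Ioi z) z := by
    intro z hz
    refine (((hasDerivAt_log hz.1.ne').neg.pow ℓ).mul
      (hasDerivAt_rpow_const (p := δ) (.inl hz.1.ne'))).hasDerivWithinAt.congr_deriv ?_
    simp only [Pi.neg_apply, Pi.pow_apply]
    rw [rpow_sub_one hz.1.ne']
    field_simp
    ring
  have hftc := intervalIntegral.integral_eq_sub_of_hasDeriv_right_of_le hy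
    ((continuousOn_neg_log_pow_mul_rpow ℓ hδ).mono Icc_subset_Ici_self) hderiv
    (((hint ℓ).const_mul δ).sub ((hint (ℓ - 1)).const_mul ℓ))
  rw [intervalIntegral.integral_sub ((hint ℓ).const_mul δ) ((hint (ℓ - 1)).const_mul ℓ),
    intervalIntegral.integral_const_mul, intervalIntegral.integral_const_mul, zero_rpow hδ.ne',
    mul_zero, sub_zero] at hftc
  linarith

lemma continuousOn_mul_neg_log_pow_mul_inv (ℓ : ℕ) :
    ContinuousOn (fun z : ℝ => ℓ * (-log z) ^ (ℓ - 1) * z⁻¹) {0}ᶜ :=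
  (continuousOn_const.mul (continuousOn_log.neg.pow _)).mul continuousOn_inv₀

lemma integral_mul_neg_log_pow_mul_inv (ℓ : ℕ) {x y : ℝ} (hx : 0 < x) (hxy : x ≤ y) :
    ∫ z in x..y, ℓ * (-log z) ^ (ℓ - 1) * z⁻¹ = (-log x) ^ ℓ - (-log y) ^ ℓ := by
  have hne : ∀ z ∈ uIcc x y, z ≠ 0 := fun z hz =>
    (hx.trans_le (uIcc_of_le hxy ▸ hz).1).ne'
  have hderiv : ∀ z ∈ uIcc x y,
      HasDerivAt (fun w => -(-log w) ^ ℓ) (ℓ * (-log z) ^ (ℓ - 1) * z⁻¹) z := fun z hz => by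
    refine ((hasDerivAt_log (hne z hz)).neg.pow ℓ).neg.congr_deriv ?_
    simp only [Pi.neg_apply]
    ring
  rw [intervalIntegral.integral_eq_sub_of_hasDerivAt hderiv
    ((continuousOn_mul_neg_log_pow_mul_inv ℓ).mono hne).intervalIntegrable]
  ring

lemma ofReal_neg_log_pow_le (ℓ : ℕ) {x y : ℝ} (hx : 0 ≤ x) (hxy : x ≤ y) (hy1 : y ≤ 1) :
    ENNReal.ofReal ((-log x) ^ ℓ) ≤ ENNReal.ofReal ((-log y) ^ ℓ)
      + ∫⁻ z in Ioo x y, ENNReal.ofReal (ℓ * (-log z) ^ (ℓ - 1) * z⁻¹) := by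
  have hlogy : 0 ≤ -log y := neg_nonneg.2 (log_nonpos (hx.trans hxy) hy1)
  rcases hx.eq_or_lt with rfl | hx
  · -- junk value `log 0 = 0`: the left side is `0 ^ ℓ`
    rw [log_zero, neg_zero]
    exact le_add_right (ENNReal.ofReal_le_ofReal (pow_le_pow_left₀ le_rfl hlogy ℓ))
  have hint : IntegrableOn (fun z => ℓ * (-log z) ^ (ℓ - 1) * z⁻¹) (Ioo x y) :=
    ((continuousOn_mul_neg_log_pow_mul_inv ℓ).mono fun z hz => (hx.trans_le hz.1).ne'
      ).integrableOn_Icc.mono_set Ioo_subset_Icc_self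
  have hnonneg : ∀ z ∈ Ioo x y, 0 ≤ ℓ * (-log z) ^ (ℓ - 1) * z⁻¹ := fun z hz =>
    mul_nonneg (mul_nonneg ℓ.cast_nonneg
      (neg_log_pow_nonneg _ (hx.trans hz.1).le (hz.2.le.trans hy1)))
      (inv_nonneg.2 (hx.trans hz.1).le)
  refine le_of_eq ?_
  calc ENNReal.ofReal ((-log x) ^ ℓ)
      = ENNReal.ofReal ((-log y) ^ ℓ + ∫ z in Ioo x y, ℓ * (-log z) ^ (ℓ - 1) * z⁻¹) := by
        rw [← integral_Ioc_eq_integral_Ioo, ← intervalIntegral.integral_of_le hxy,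
          integral_mul_neg_log_pow_mul_inv ℓ hx hxy, add_sub_cancel]
    _ = _ := by
        rw [ENNReal.ofReal_add (pow_nonneg hlogy ℓ) (setIntegral_nonneg measurableSet_Ioo hnonneg),
          ofReal_integral_eq_lintegral_ofReal hint
            (ae_restrict_of_forall_mem measurableSet_Ioo hnonneg)]

lemma setLIntegral_ofReal_mul_neg_log_pow_mul_inv_mul_rpow (ℓ : ℕ) {C δ y : ℝ} (hC : 0 ≤ C)
    (hδ : 0 < δ) (hy : 0 ≤ y) (hy1 : y ≤ 1) :
    ∫⁻ z in Ioo 0 y, ENNReal.ofReal (ℓ * (-log z) ^ (ℓ - 1) * z⁻¹) * ENNReal.ofReal (C * z ^ δ)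
      = ENNReal.ofReal (C * (ℓ * ∫ z in 0..y, (-log z) ^ (ℓ - 1) * z ^ (δ - 1))) := by
  rw [← mul_assoc, ENNReal.ofReal_mul (mul_nonneg hC ℓ.cast_nonneg),
    ofReal_integral_neg_log_pow_mul_rpow _ hδ hy hy1,
    ← lintegral_const_mul' _ _ ENNReal.ofReal_ne_top]
  refine setLIntegral_congr_fun measurableSet_Ioo fun z hz => ?_
  rw [← ENNReal.ofReal_mul' (mul_nonneg hC (rpow_nonneg hz.1.le δ)),
    ← ENNReal.ofReal_mul (mul_nonneg hC ℓ.cast_nonneg), rpow_sub_one hz.1.ne']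
  congr 1
  field_simp

lemma lintegral_setLIntegral_indicator_Ioi {α : Type*} [MeasurableSpace α] (μ : Measure α)
    [SFinite μ] {q : α → ℝ} (hq : Measurable q) {g : ℝ → ℝ≥0∞} (hg : Measurable g) (s : Set ℝ) :
    ∫⁻ a, (∫⁻ z in s, (Ioi (q a)).indicator g z) ∂μ = ∫⁻ z in s, g z * μ {a | q a < z} := by
  have hmeas : Measurable (Function.uncurry fun a z => (Ioi (q a)).indicator g z) :=
    (hg.comp measurable_snd).indicator (measurableSet_lt (hq.comp measurable_fst) measurable_snd)
  rw [lintegral_lintegral_swap hmeas.aemeasurable]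
  refine lintegral_congr fun z => ?_
  rw [← lintegral_indicator_const (measurableSet_lt hq measurable_const)]
  rfl

lemma lintegral_indicator_ofReal_neg_log_pow_le {α : Type*} [MeasurableSpace α]
    (μ : Measure α) [SFinite μ] {q : α → ℝ} (hq : Measurable q) (hq0 : ∀ a, 0 ≤ q a) (ℓ : ℕ)
    {C δ y : ℝ} (hC : 0 ≤ C) (hδ : 0 < δ) (hy : 0 < y) (hy1 : y ≤ 1)
    (hbound : ∀ z, 0 < z → z ≤ y → μ {a | q a < z} ≤ ENNReal.ofReal (C * z ^ δ)) :
    ∫⁻ a, ENNReal.ofReal ({a | q a < y}.indicator (fun a => (-log (q a)) ^ ℓ) a) ∂μ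
      ≤ ENNReal.ofReal (C * J ℓ δ y) := by
  set ψ : ℝ → ℝ≥0∞ := fun z => ENNReal.ofReal (ℓ * (-log z) ^ (ℓ - 1) * z⁻¹)
  have hS : MeasurableSet {a | q a < y} := measurableSet_lt hq measurable_const
  have hpow : 0 ≤ (-log y) ^ ℓ := neg_log_pow_nonneg ℓ hy.le hy1
  have hpt : ∀ a, ENNReal.ofReal ({a | q a < y}.indicator (fun a => (-log (q a)) ^ ℓ) a)
      ≤ {a | q a < y}.indicator (fun _ => ENNReal.ofReal ((-log y) ^ ℓ)) a
        + ∫⁻ z in Ioo 0 y, (Ioi (q a)).indicator ψ z := by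
    intro a
    by_cases ha : a ∈ {a | q a < y}
    · have hIoo : Ioi (q a) ∩ Ioo 0 y = Ioo (q a) y :=
        Set.ext fun z => ⟨fun h => ⟨h.1, h.2.2⟩, fun h => ⟨h.1, (hq0 a).trans_lt h.1, h.2⟩⟩
      rw [indicator_of_mem ha, indicator_of_mem ha, setLIntegral_indicator measurableSet_Ioi, hIoo]
      exact ofReal_neg_log_pow_le ℓ (hq0 a) (le_of_lt ha) hy1
    · rw [indicator_of_notMem ha, ENNReal.ofReal_zero]
      exact zero_le
  calc _ ≤ ∫⁻ a, ({a | q a < y}.indicator (fun _ => ENNReal.ofReal ((-log y) ^ ℓ)) a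
          + ∫⁻ z in Ioo 0 y, (Ioi (q a)).indicator ψ z) ∂μ := lintegral_mono hpt
    _ = ENNReal.ofReal ((-log y) ^ ℓ) * μ {a | q a < y}
          + ∫⁻ z in Ioo 0 y, ψ z * μ {a | q a < z} := by
        rw [lintegral_add_left (measurable_const.indicator hS), lintegral_indicator_const hS,
          lintegral_setLIntegral_indicator_Ioi μ hq (by fun_prop)]
    _ ≤ ENNReal.ofReal ((-log y) ^ ℓ) * ENNReal.ofReal (C * y ^ δ)
          + ∫⁻ z in Ioo 0 y, ψ z * ENNReal.ofReal (C * z ^ δ) := by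
        refine add_le_add (by gcongr; exact hbound y hy le_rfl)
          (setLIntegral_mono (by fun_prop) fun z hz => by gcongr; exact hbound z hz.1 hz.2.le)
    _ = ENNReal.ofReal (C * J ℓ δ y) := by
        rw [setLIntegral_ofReal_mul_neg_log_pow_mul_inv_mul_rpow ℓ hC hδ hy.le hy1,
          ← ENNReal.ofReal_mul hpow, ← ENNReal.ofReal_add
            (mul_nonneg hpow (mul_nonneg hC (rpow_nonneg hy.le δ))) (mul_nonneg hC
              (mul_nonneg ℓ.cast_nonneg (integral_neg_log_pow_mul_rpow_nonneg _ δ hy.le hy1))),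
          J_eq_mul_integral_neg_log_pow, mul_integral_neg_log_pow_mul_rpow ℓ hδ hy.le]
        ring_nf

lemma integral_indicator_neg_log_pow_nonneg_and_le {α : Type*} [MeasurableSpace α]
    (μ : Measure α) [SFinite μ] {q : α → ℝ} (hq : Measurable q) (hq0 : ∀ a, 0 ≤ q a) (ℓ : ℕ)
    {C δ y : ℝ} (hC : 0 ≤ C) (hδ : 0 < δ) (hy : 0 < y) (hy1 : y ≤ 1)
    (hbound : ∀ z, 0 < z → z ≤ y → μ {a | q a < z} ≤ ENNReal.ofReal (C * z ^ δ)) :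
    0 ≤ ∫ a, {a | q a < y}.indicator (fun a => (-log (q a)) ^ ℓ) a ∂μ ∧
      ∫ a, {a | q a < y}.indicator (fun a => (-log (q a)) ^ ℓ) a ∂μ ≤ C * J ℓ δ y := by
  have hnonneg : ∀ a, 0 ≤ {a | q a < y}.indicator (fun a => (-log (q a)) ^ ℓ) a :=
    indicator_nonneg fun a ha => neg_log_pow_nonneg ℓ (hq0 a) ((le_of_lt ha).trans hy1)
  have hCJ : 0 ≤ C * J ℓ δ y := by
    rw [J_eq_mul_integral_neg_log_pow]
    exact mul_nonneg hC (mul_nonneg hδ.le (integral_neg_log_pow_mul_rpow_nonneg ℓ δ hy.le hy1))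
  refine ⟨integral_nonneg hnonneg, ?_⟩
  rw [integral_eq_lintegral_of_nonneg_ae (.of_forall hnonneg)
    (((measurable_log.comp hq).neg.pow_const ℓ).indicator
      (measurableSet_lt hq measurable_const)).aestronglyMeasurable]
  exact ENNReal.toReal_le_of_le_ofReal hCJ
    (lintegral_indicator_ofReal_neg_log_pow_le μ hq hq0 ℓ hC hδ hy hy1 hbound)

theorem signed_log_power_integral_bound_multivariate_general
    (n : ℕ) (P : MvPolynomial (Fin n) ℂ) (ℓ : ℕ)
    (C δ y₀ : ℝ) (hC : 0 < C) (hδ : 0 < δ) (hy₀1 : y₀ ≤ 1)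
    (hbound : ∀ y : ℝ, 0 < y → y ≤ y₀ →
      volume (torusBox n ∩ Sn P y) ≤ ENNReal.ofReal (C * y ^ δ)) :
    ∀ y : ℝ, 0 < y → y ≤ y₀ →
      0 ≤ (-1:ℝ)^ℓ * ∫ θ in torusBox n,
            Set.indicator (Sn P y) (fun θ' => (Real.log ‖evalTorus P θ'‖)^ℓ) θ ∧
        (-1:ℝ)^ℓ * ∫ θ in torusBox n,
            Set.indicator (Sn P y) (fun θ' => (Real.log ‖evalTorus P θ'‖)^ℓ) θ
          ≤ C * J ℓ δ y := by
  intro y hy hyle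
  have hq : Continuous fun θ => ‖evalTorus P θ‖ :=
    ((MvPolynomial.continuous_eval (p := P)).comp (by fun_prop)).norm
  have hsign : (-1:ℝ)^ℓ * ∫ θ in torusBox n,
      (Sn P y).indicator (fun θ' => (log ‖evalTorus P θ'‖)^ℓ) θ
      = ∫ θ in torusBox n, (Sn P y).indicator (fun θ' => (-log ‖evalTorus P θ'‖)^ℓ) θ := by
    rw [← integral_const_mul]
    simp only [← indicator_const_mul, neg_pow (log _)]
  rw [hsign]
  refine integral_indicator_neg_log_pow_nonneg_and_le _ hq.measurable (fun _ => norm_nonneg _) ℓ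
    hC.le hδ hy (hyle.trans hy₀1) fun z hz hzy => ?_
  rw [Measure.restrict_apply (measurableSet_lt hq.measurable measurable_const), inter_comm]
  exact hbound z hz (hzy.trans hyle)

/-- If `μ_n(S_n(P,y)) ≤ C y^δ` for all `0 < y ≤ y₀`, then for all `0 < y ≤ y₀`,
`0 ≤ (−1)^ℓ ∫_{S_n(P,y)} (log|P|)^ℓ dμ_n ≤ C · J_{ℓ,δ}(y)`. -/
theorem signed_log_power_integral_bound_multivariate
    (n : ℕ) (P : MvPolynomial (Fin n) ℂ) (hP : P ≠ 0) (ℓ : ℕ) (hℓ : 1 ≤ ℓ)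
    (C δ y₀ : ℝ) (hC : 0 < C) (hδ : 0 < δ) (hy₀ : 0 < y₀) (hy₀1 : y₀ ≤ 1)
    (hbound : ∀ y : ℝ, 0 < y → y ≤ y₀ →
      volume (torusBox n ∩ Sn P y) ≤ ENNReal.ofReal (C * y ^ δ)) :
    ∀ y : ℝ, 0 < y → y ≤ y₀ →
      0 ≤ (-1:ℝ)^ℓ * ∫ θ in torusBox n,
            Set.indicator (Sn P y) (fun θ' => (Real.log ‖evalTorus P θ'‖)^ℓ) θ ∧
        (-1:ℝ)^ℓ * ∫ θ in torusBox n,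
            Set.indicator (Sn P y) (fun θ' => (Real.log ‖evalTorus P θ'‖)^ℓ) θ
          ≤ C * J ℓ δ y :=
  signed_log_power_integral_bound_multivariate_general n P ℓ C δ y₀ hC hδ hy₀1 hbound
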